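/- Let N ≥ 1, k ≥ 1, ℓ ∈ ℝ^N, p ∈ ℂ. Let ξ = (ξ₁, …, ξ_N) ∈ ℂ^N have pairwise distinct entries with det A_ℓ(ξ) ≠ 0, and let u₁, …, u_k, v₁, …, v_k ∈ ℂ be 2k pairwise distinct complex numbers, none of which equals any ξ_l. Then 𝓑_{ℓ,p}(u₁, …, u_k, ξ₁, …, ξ_N / v₁, …, v_k) / 𝓑_ℓ(ξ) = (D(u; −v)/(Δ(u) Δ(−v))) · det( (1/(u_i − v_j)) · 𝓑_{ℓ,p}(u_i, ξ₁, …, ξ_N / v_j) / 𝓑_ℓ(ξ) )_{i,j=1}^k, where u = (u₁, …, u_k) and v = (v₁, …, v_k). -/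

import Mathlib

open Complex Finset Filter Topology

noncomputable section

/-- Vandermonde product `Δ(w) = ∏_{i<j} (w i - w j)`. -/
def vprod {m : ℕ} (w : Fin m → ℂ) : ℂ :=
  ∏ i : Fin m, ∏ j : Fin m, if i < j then w i - w j else 1

/-- `D(x;y) = ∏_{i,j} (x i + y j)`. -/
def dprod {m n : ℕ} (x : Fin m → ℂ) (y : Fin n → ℂ) : ℂ :=
  ∏ i : Fin m, ∏ j : Fin n, (x i + y j)

/-- The `(N+k) × (N+k)` matrix `(E_p(u;v) | A_ℓ(u))`. -/
def besselLiftMatrix (N k : ℕ) (l : Fin N → ℝ) (p : ℂ)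
    (u : Fin (N + k) → ℂ) (v : Fin k → ℂ) :
    Matrix (Fin (N + k)) (Fin (N + k)) ℂ :=
  Matrix.of fun i j =>
    if h : (j : ℕ) < k then Complex.exp (p * (u i - v ⟨j, h⟩)) / (u i - v ⟨j, h⟩)
    else Complex.exp (u i * (l ⟨(j : ℕ) - k, by have := j.isLt; omega⟩ : ℂ))

/-- The supersymmetric lift `𝓑_{ℓ,p}(u / v)` of the multivariate Bessel function. -/
def besselLift (N k : ℕ) (l : Fin N → ℝ) (p : ℂ)
    (u : Fin (N + k) → ℂ) (v : Fin k → ℂ) : ℂ :=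
  (-1 : ℂ) ^ (N * k) * dprod u (fun j => -v j) /
      (vprod u * vprod fun j => -v j) *
    (besselLiftMatrix N k l p u v).det

/-- The multivariate Bessel function `𝓑_ℓ(w) = det(e^{w_i ℓ_j}) / Δ(w)`. -/
def besselFun (N : ℕ) (l : Fin N → ℝ) (w : Fin N → ℂ) : ℂ :=
  (Matrix.of fun i j : Fin N => Complex.exp (w i * (l j : ℂ))).det / vprod w

/-- The concatenation `(u₁, …, u_k, ξ₁, …, ξ_N)` as a vector indexed by `Fin (N + k)`. -/
def catUX {N k : ℕ} (u : Fin k → ℂ) (ξ : Fin N → ℂ) : Fin (N + k) → ℂ :=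
  fun i => if h : (i : ℕ) < k then u ⟨i, h⟩
    else ξ ⟨(i : ℕ) - k, by have := i.isLt; omega⟩

/-! Reordering rows and columns turns the matrix of `𝓑_{ℓ,p}(u, ξ / v)` into the block matrix
`[[E_p(u;v), A_ℓ(u)], [E_p(ξ;v), A_ℓ(ξ)]]`, whose determinant is `det A_ℓ(ξ) · det S` for the
Schur complement `S = E_p(u;v) - A_ℓ(u) A_ℓ(ξ)⁻¹ E_p(ξ;v)`. Restricting `u` and `v` to single
entries restricts `S` to the entry `S i j`, so each `1 × 1` lift on the right-hand side is `S i j`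
times prefactors; these prefactors split into a row and a column scaling of `det S`, which
reassemble into those of the `k × k` lift. -/

lemma catUX_eq_append {N k : ℕ} (u : Fin k → ℂ) (ξ : Fin N → ℂ) :
    catUX u ξ = Fin.append u ξ ∘ Fin.cast (Nat.add_comm N k) := by
  ext i
  obtain ⟨j, rfl⟩ := (finCongr (Nat.add_comm k N)).surjective i
  refine Fin.addCases (fun a => ?_) (fun b => ?_) j <;> simp [catUX]

section Products

variable {m n : ℕ}

lemma vprod_comp_cast {m' : ℕ} (h : m' = m) (w : Fin m → ℂ) :
    vprod (w ∘ Fin.cast h) = vprod w := by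
  subst h; rfl

lemma dprod_comp_cast {m' : ℕ} (h : m' = m) (x : Fin m → ℂ) (y : Fin n → ℂ) :
    dprod (x ∘ Fin.cast h) y = dprod x y := by
  subst h; rfl

lemma dprod_append_left {m' : ℕ} (x : Fin m → ℂ) (x' : Fin m' → ℂ) (y : Fin n → ℂ) :
    dprod (Fin.append x x') y = dprod x y * dprod x' y := by
  simp [dprod, Fin.prod_univ_add]

lemma vprod_append (x : Fin m → ℂ) (y : Fin n → ℂ) :
    vprod (Fin.append x y) = vprod x * dprod x (fun j => -y j) * vprod y := by
  have castAdd_lt_natAdd (i : Fin m) (j : Fin n) : Fin.castAdd n i < Fin.natAdd m j := by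
    simp only [Fin.lt_def, Fin.val_castAdd, Fin.val_natAdd]; omega
  have natAdd_not_lt_castAdd (i : Fin n) (j : Fin m) : ¬ Fin.natAdd m i < Fin.castAdd n j := by
    simp only [Fin.lt_def, Fin.val_castAdd, Fin.val_natAdd]; omega
  simp only [vprod, dprod, sub_eq_add_neg, Fin.prod_univ_add, Fin.append_left, Fin.append_right,
    prod_mul_distrib, (Fin.strictMono_castAdd n).lt_iff_lt, Fin.natAdd_lt_natAdd_iff,
    castAdd_lt_natAdd, natAdd_not_lt_castAdd, ↓reduceIte, prod_const_one, mul_one]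
  ring

lemma dprod_eq_prod_dprod_left (x : Fin m → ℂ) (y : Fin n → ℂ) :
    dprod x y = ∏ i, dprod (fun _ : Fin 1 => x i) y := by
  simp [dprod]

lemma dprod_eq_prod_dprod_right (x : Fin m → ℂ) (y : Fin n → ℂ) :
    dprod x y = ∏ j, dprod x (fun _ : Fin 1 => y j) := by
  simpa [dprod] using Finset.prod_comm

lemma vprod_ne_zero {w : Fin m → ℂ} (hw : Function.Injective w) : vprod w ≠ 0 :=
  Finset.prod_ne_zero_iff.mpr fun i _ => Finset.prod_ne_zero_iff.mpr fun j _ => by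
    split_ifs with h
    · exact sub_ne_zero.mpr (hw.ne h.ne)
    · exact one_ne_zero

end Products

section Matrices

variable {ι κ : Type*}

-- `A_ℓ(x)` and `E_p(x; y)`
def expMatrix (l : κ → ℝ) (x : ι → ℂ) : Matrix ι κ ℂ :=
  Matrix.of fun i j => Complex.exp (x i * (l j : ℂ))

def cauchyExpMatrix (p : ℂ) (x : ι → ℂ) (y : κ → ℂ) : Matrix ι κ ℂ :=
  Matrix.of fun i j => Complex.exp (p * (x i - y j)) / (x i - y j)

lemma injective_of_det_expMatrix_ne_zero [Fintype ι] [DecidableEq ι] {l : ι → ℝ} {x : ι → ℂ}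
    (h : (expMatrix l x).det ≠ 0) : Function.Injective x := by
  intro i j hij
  by_contra hne
  exact h (Matrix.det_zero_of_row_eq hne (by ext; simp [expMatrix, hij]))

lemma det_mul_column_mul_row {R : Type*} [Fintype ι] [DecidableEq ι] [CommRing R]
    (r c : ι → R) (M : Matrix ι ι R) :
    (Matrix.of fun i j => r i * (c j * M i j)).det = (∏ i, r i) * (∏ j, c j) * M.det := by
  have h := Matrix.det_mul_column r (Matrix.of fun i j => c j * M i j)
  simp only [Matrix.of_apply] at h
  rw [h, Matrix.det_mul_row, mul_assoc]

end Matrices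

def catEquiv (N k : ℕ) : Fin k ⊕ Fin N ≃ Fin (N + k) :=
  finSumFinEquiv.trans (finCongr (Nat.add_comm k N))

section BesselLift

variable {N k : ℕ} (l : Fin N → ℝ) (p : ℂ) (ξ : Fin N → ℂ)

lemma besselLiftMatrix_catUX_submatrix (u v : Fin k → ℂ) :
    (besselLiftMatrix N k l p (catUX u ξ) v).submatrix (catEquiv N k) (catEquiv N k) =
      Matrix.fromBlocks (cauchyExpMatrix p u v) (expMatrix l u)
        (cauchyExpMatrix p ξ v) (expMatrix l ξ) := by
  ext (i | i) (j | j) <;>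
    simp [besselLiftMatrix, catEquiv, catUX_eq_append, cauchyExpMatrix, expMatrix]

def besselSchur {ι κ : Type*} (u : ι → ℂ) (v : κ → ℂ) : Matrix ι κ ℂ :=
  cauchyExpMatrix p u v - expMatrix l u * (expMatrix l ξ)⁻¹ * cauchyExpMatrix p ξ v

lemma besselSchur_comp {ι κ ι' κ' : Type*} (u : ι → ℂ) (v : κ → ℂ) (f : ι' → ι) (g : κ' → κ) :
    besselSchur l p ξ (u ∘ f) (v ∘ g) = (besselSchur l p ξ u v).submatrix f g := by
  ext i j
  simp [besselSchur, cauchyExpMatrix, expMatrix, Matrix.mul_apply]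

variable {ξ}

lemma det_besselLiftMatrix_catUX (hA : (expMatrix l ξ).det ≠ 0) (u v : Fin k → ℂ) :
    (besselLiftMatrix N k l p (catUX u ξ) v).det =
      (expMatrix l ξ).det * (besselSchur l p ξ u v).det := by
  have := (expMatrix l ξ).invertibleOfIsUnitDet hA.isUnit
  rw [← Matrix.det_submatrix_equiv_self (catEquiv N k), besselLiftMatrix_catUX_submatrix,
    Matrix.det_fromBlocks₂₂, Matrix.invOf_eq_nonsing_inv, besselSchur]

lemma besselLift_catUX_div_besselFun (hA : (expMatrix l ξ).det ≠ 0) (u v : Fin k → ℂ) :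
    besselLift N k l p (catUX u ξ) v / besselFun N l ξ =
      (-1) ^ (N * k) * (dprod u (fun j => -v j) / (vprod u * vprod fun j => -v j)) *
        (dprod ξ (fun j => -v j) / dprod u (fun j => -ξ j)) * (besselSchur l p ξ u v).det := by
  have hV : vprod ξ ≠ 0 := vprod_ne_zero (injective_of_det_expMatrix_ne_zero hA)
  rw [besselLift, besselFun, det_besselLiftMatrix_catUX l p hA, catUX_eq_append,
    vprod_comp_cast, dprod_comp_cast, vprod_append, dprod_append_left]
  change _ / ((expMatrix l ξ).det / _) = _
  field_simp

lemma inv_sub_mul_besselLift_single_div_besselFun (hA : (expMatrix l ξ).det ≠ 0)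
    (u v : Fin k → ℂ) (i j : Fin k) (huv : u i ≠ v j) :
    (u i - v j)⁻¹ * (besselLift N 1 l p (catUX (fun _ : Fin 1 => u i) ξ) (fun _ : Fin 1 => v j) /
        besselFun N l ξ) =
      (-1) ^ N / dprod (fun _ : Fin 1 => u i) (fun b => -ξ b) *
        (dprod ξ (fun _ : Fin 1 => -v j) * besselSchur l p ξ u v i j) := by
  have hS : besselSchur l p ξ (fun _ : Fin 1 => u i) (fun _ : Fin 1 => v j) =
      (besselSchur l p ξ u v).submatrix (fun _ => i) (fun _ => j) :=
    besselSchur_comp l p ξ u v _ _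
  have huv' : u i - v j ≠ 0 := sub_ne_zero.mpr huv
  rw [besselLift_catUX_div_besselFun l p hA, hS, Matrix.det_unique]
  simp only [dprod, vprod, ← sub_eq_add_neg, univ_unique, Fin.default_eq_zero, prod_singleton,
    mul_one, not_lt_zero, ↓reduceIte, prod_const_one, div_one, Matrix.submatrix_apply]
  field_simp

end BesselLift

theorem statement3_general (N k : ℕ) (l : Fin N → ℝ) (p : ℂ)
    (ξ : Fin N → ℂ)
    (hdet : (Matrix.of fun i j : Fin N => Complex.exp (ξ i * (l j : ℂ))).det ≠ 0)
    (u v : Fin k → ℂ)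
    (hdistinct : Function.Injective (Sum.elim u v : Fin k ⊕ Fin k → ℂ)) :
    besselLift N k l p (catUX u ξ) v / besselFun N l ξ =
      dprod u (fun j => -v j) / (vprod u * vprod fun j => -v j) *
        (Matrix.of fun i j : Fin k =>
          (u i - v j)⁻¹ *
            (besselLift N 1 l p (catUX (fun _ : Fin 1 => u i) ξ) (fun _ : Fin 1 => v j) /
              besselFun N l ξ)).det := by
  have hA : (expMatrix l ξ).det ≠ 0 := hdet
  have huv (i j : Fin k) : u i ≠ v j := hdistinct.ne Sum.inl_ne_inr
  simp_rw [inv_sub_mul_besselLift_single_div_besselFun l p hA u v _ _ (huv _ _)]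
  rw [det_mul_column_mul_row, besselLift_catUX_div_besselFun l p hA,
    ← dprod_eq_prod_dprod_right, Finset.prod_div_distrib, ← dprod_eq_prod_dprod_left]
  simp only [Finset.prod_const, Finset.card_univ, Fintype.card_fin, ← pow_mul]
  ring

/-- Determinantal formula:
`𝓑_{ℓ,p}(u₁,…,u_k,ξ₁,…,ξ_N / v₁,…,v_k)/𝓑_ℓ(ξ)
  = D(u;-v)/(Δ(u)Δ(-v)) · det( (u_i - v_j)⁻¹ · 𝓑_{ℓ,p}(u_i,ξ / v_j)/𝓑_ℓ(ξ) )`. -/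
theorem statement3 (N k : ℕ) (hN : 1 ≤ N) (hk : 1 ≤ k) (l : Fin N → ℝ) (p : ℂ)
    (ξ : Fin N → ℂ) (hξ : Function.Injective ξ)
    (hdet : (Matrix.of fun i j : Fin N => Complex.exp (ξ i * (l j : ℂ))).det ≠ 0)
    (u v : Fin k → ℂ)
    (hdistinct : Function.Injective (Sum.elim u v : Fin k ⊕ Fin k → ℂ))
    (huξ : ∀ i j, u i ≠ ξ j) (hvξ : ∀ i j, v i ≠ ξ j) :
    besselLift N k l p (catUX u ξ) v / besselFun N l ξ =
      dprod u (fun j => -v j) / (vprod u * vprod fun j => -v j) *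
        (Matrix.of fun i j : Fin k =>
          (u i - v j)⁻¹ *
            (besselLift N 1 l p (catUX (fun _ : Fin 1 => u i) ξ) (fun _ : Fin 1 => v j) /
              besselFun N l ξ)).det :=
  statement3_general N k l p ξ hdet u v hdistinct
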